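/- For every real a > 0 and every positive integer p, one has Σ_{j=1}^p ψ(2j-1+a) = (p + a/2 - 1/2)(ψ(a+2p-1) - ψ(a+1)) + (1/4)(ψ(a/2+p) - ψ(a/2+1)) - p + 1 + p ψ(a+1). -/

import Mathlib

/-- The digamma function `ψ(x) = Γ'(x)/Γ(x)`, as the derivative of `log ∘ Γ`. -/
noncomputable def digamma (x : ℝ) : ℝ :=
  deriv (fun y => Real.log (Real.Gamma y)) x

lemma logGamma_diff {x : ℝ} (hx : 0 < x) :
    DifferentiableAt ℝ (fun y => Real.log (Real.Gamma y)) x := by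
  refine DifferentiableAt.log (Real.differentiableAt_Gamma fun m => ?_)
    (Real.Gamma_pos_of_pos hx).ne'
  intro h; have : (0:ℝ) < -(m:ℝ) := h ▸ hx; simp at this; linarith [this]

lemma digamma_add_one {x : ℝ} (hx : 0 < x) :
    digamma (x + 1) = digamma x + 1 / x := by
  have h1 : digamma (x + 1) = deriv (fun y => Real.log (Real.Gamma (y + 1))) x := by
    rw [digamma]
    have := (logGamma_diff (by linarith : (0:ℝ) < x + 1)).hasDerivAt
    have h2 := this.comp x ((hasDerivAt_id x).add_const 1)
    have h3 : HasDerivAt (fun y => Real.log (Real.Gamma (y + 1)))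
        (deriv (fun y => Real.log (Real.Gamma y)) (x + 1) * 1) x := h2
    rw [h3.deriv, mul_one]
  rw [h1]
  have heq : (fun y => Real.log (Real.Gamma (y + 1))) =ᶠ[nhds x]
      (fun y => Real.log y + Real.log (Real.Gamma y)) := by
    filter_upwards [eventually_gt_nhds hx] with y hy
    rw [Real.Gamma_add_one hy.ne', Real.log_mul hy.ne' (Real.Gamma_pos_of_pos hy).ne']
  rw [heq.deriv_eq, deriv_fun_add (Real.differentiableAt_log hx.ne') (logGamma_diff hx),
    Real.deriv_log, digamma, add_comm, one_div]

lemma digamma_congr {x y : ℝ} (h : x = y) : digamma x = digamma y := by rw [h]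


/-- Closed form for `∑_{j=1}^p ψ(2j-1+a)`. -/
theorem digamma_odd_sum (a : ℝ) (ha : 0 < a) (p : ℕ) (hp : 1 ≤ p) :
    ∑ j ∈ Finset.Icc 1 p, digamma (2 * (j : ℝ) - 1 + a)
      = ((p : ℝ) + a / 2 - 1 / 2) * (digamma (a + 2 * p - 1) - digamma (a + 1))
        + (1 / 4) * (digamma (a / 2 + p) - digamma (a / 2 + 1))
        - p + 1 + p * digamma (a + 1) := by
  induction p, hp using Nat.le_induction with
  | base =>
    simp only [Finset.Icc_self, Finset.sum_singleton, Nat.cast_one]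
    rw [digamma_congr (show 2 * (1:ℝ) - 1 + a = a + 1 by ring),
        digamma_congr (show a + 2 * (1:ℝ) - 1 = a + 1 by ring)]
    ring
  | succ p hp ih =>
    rw [Finset.sum_Icc_succ_top (by omega : 1 ≤ p + 1), ih]
    push_cast
    set q : ℝ := (p : ℝ) with hq
    have hq1 : (1:ℝ) ≤ q := by rw [hq]; exact_mod_cast hp
    have hx1 : (0:ℝ) < a + 2 * q - 1 := by linarith
    have hx2 : (0:ℝ) < a + 2 * q := by linarith
    have hx3 : (0:ℝ) < a / 2 + q := by linarith
    have key1 : digamma (2 * (q + 1) - 1 + a)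
        = digamma (a + 2 * q - 1) + 1 / (a + 2 * q - 1) + 1 / (a + 2 * q) := by
      rw [digamma_congr (show 2 * (q + 1) - 1 + a = (a + 2 * q) + 1 by ring),
        digamma_add_one hx2,
        digamma_congr (show a + 2 * q = (a + 2 * q - 1) + 1 by ring),
        digamma_add_one hx1]
    have key2 : digamma (a + 2 * (q + 1) - 1)
        = digamma (a + 2 * q - 1) + 1 / (a + 2 * q - 1) + 1 / (a + 2 * q) := by
      rw [digamma_congr (show a + 2 * (q + 1) - 1 = 2 * (q + 1) - 1 + a by ring), key1]
    have key3 : digamma (a / 2 + (q + 1)) = digamma (a / 2 + q) + 1 / (a / 2 + q) := by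
      rw [digamma_congr (show a / 2 + (q + 1) = (a / 2 + q) + 1 by ring),
        digamma_add_one hx3]
    rw [key1, key2, key3]
    have hx1' := hx1.ne'
    have hx2' := hx2.ne'
    have hx3' := hx3.ne'
    have hr : (a + q * 2 - 1) * (1 / (a + q * 2 - 1)) = 1 := by
      rw [mul_one_div_cancel (by linarith)]
    field_simp
    linear_combination (-4 * (a + q * 2)) * hr
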